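/- Let O₁, O₂ be Onoi rings, μ : O₁³ → O₂ an Onoi mapping, and θ(a,b) = μ(a,a+b,a+b). If θ satisfies the mediality cocycle condition α₂²(θ(a,b)) + α₂(θ(c,d)) + θ(a*b, c*d) = α₂²(θ(a,c)) + α₂(θ(b,d)) + θ(a*c, b*d) for all a,b,c,d, then μ satisfies μ(a,b,b) = μ(b,a,a) and μ(a,b,c) = μ(a,c,b) for all a,b,c ∈ O₁. -/

import Mathlib

structure OnoiRing (O : Type*) [AddCommGroup O] where
  mul : O → O → O
  α : O ≃+ O
  left_distrib : ∀ a b c, mul a (b + c) = mul a b + mul a c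
  right_distrib : ∀ a b c, mul (a + b) c = mul a c + mul b c
  char2 : ∀ a : O, a + a = 0
  α_mul : ∀ a b, α (mul a b) = mul (α a) (α b)
  α_sq : ∀ a, α (α a) + α a + a = 0
  mul_α : ∀ a b, mul (α a) b = mul a (α b)

/-!
Over `𝔽₂[α]/(α² + α + 1) ≅ 𝔽₄` the map `μ` is conjugate-linear in its first argument and linear
in the other two, so moving `α` out of the arguments multiplies `μ` by `α` with weights `2, 1, 1`.
With `c = d = 0` the twists in the cocycle condition cancel and it says that the cubic form
`x ↦ μ x x x` is additive. Its polarization splits into three parts on which `x ↦ α x` acts by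
`1, α², α`; as these weights are distinct, every part vanishes. The part of weight `α²` is
`μ x y y + μ y x x`, and polarizing the part of weight `1`, `μ x x y + μ x y x`, and twisting once
more by `α` gives the symmetry of `μ` in its last two arguments.
-/

namespace OnoiRing

variable {O : Type*} [AddCommGroup O]

theorem eq_of_add_eq_zero (R : OnoiRing O) {a b : O} (h : a + b = 0) : a = b :=
  calc a = a + (b + b) := by rw [R.char2, add_zero]
    _ = b := by rw [← add_assoc, h, zero_add]

theorem α_α (R : OnoiRing O) (a : O) : R.α (R.α a) = R.α a + a :=
  R.eq_of_add_eq_zero (by rw [← add_assoc]; exact R.α_sq a)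

theorem α_α_α (R : OnoiRing O) (a : O) : R.α (R.α (R.α a)) = a := by
  rw [R.α_α, R.α_α, add_right_comm, R.char2, zero_add]

theorem eq_zero_of_twisted_sums (R : OnoiRing O) {a b c : O} (h₀ : a + b + c = 0)
    (h₁ : a + R.α (R.α b) + R.α c = 0) (h₂ : a + R.α b + R.α (R.α c) = 0) : a = 0 := by
  have key : (a + b + c) + (a + R.α (R.α b) + R.α c) + (a + R.α b + R.α (R.α c))
      = a + (a + a) + (R.α (R.α b) + R.α b + b) + (R.α (R.α c) + R.α c + c) := by abel
  simpa only [h₀, h₁, h₂, R.char2, R.α_sq, add_zero, eq_comm] using key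

theorem eq_zero_of_add_eq_zero_of_twist (R : OnoiRing O) {a b : O} (h₀ : a + b = 0)
    (h₁ : R.α (R.α a) + R.α b = 0) : a = 0 := by
  obtain rfl := R.eq_of_add_eq_zero h₀
  simpa [h₁] using R.α_sq a

end OnoiRing

structure IsOnoiMapping {O₁ O₂ : Type*} [AddCommGroup O₁] [AddCommGroup O₂]
    (R₁ : OnoiRing O₁) (R₂ : OnoiRing O₂) (μ : O₁ → O₁ → O₁ → O₂) : Prop where
  map_add_left : ∀ a₁ a₂ b c, μ (a₁ + a₂) b c = μ a₁ b c + μ a₂ b c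
  map_add_mid : ∀ a b₁ b₂ c, μ a (b₁ + b₂) c = μ a b₁ c + μ a b₂ c
  map_add_right : ∀ a b c₁ c₂, μ a b (c₁ + c₂) = μ a b c₁ + μ a b c₂
  map_α : ∀ a b c, μ (R₁.α a) (R₁.α b) (R₁.α c) = R₂.α (μ a b c)
  α_left_eq : ∀ a b c, μ (R₁.α a) b c = μ a (R₁.α b) (R₁.α c)
  α_mid_eq : ∀ a b c, μ a (R₁.α b) c = μ a b (R₁.α c)

namespace IsOnoiMapping

variable {O₁ O₂ : Type*} [AddCommGroup O₁] [AddCommGroup O₂]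
  {R₁ : OnoiRing O₁} {R₂ : OnoiRing O₂} {μ : O₁ → O₁ → O₁ → O₂}

theorem zero_left (hμ : IsOnoiMapping R₁ R₂ μ) (b c : O₁) : μ 0 b c = 0 := by
  have h := hμ.map_add_left 0 0 b c
  rwa [add_zero, left_eq_add] at h

theorem map_α_right (hμ : IsOnoiMapping R₁ R₂ μ) (a b c : O₁) :
    μ a b (R₁.α c) = R₂.α (μ a b c) := by
  rw [← hμ.map_α, hμ.α_left_eq, hμ.α_mid_eq, hμ.α_mid_eq, R₁.α_α_α]

theorem map_α_mid (hμ : IsOnoiMapping R₁ R₂ μ) (a b c : O₁) :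
    μ a (R₁.α b) c = R₂.α (μ a b c) := by
  rw [hμ.α_mid_eq, hμ.map_α_right]

theorem map_α_left (hμ : IsOnoiMapping R₁ R₂ μ) (a b c : O₁) :
    μ (R₁.α a) b c = R₂.α (R₂.α (μ a b c)) := by
  rw [hμ.α_left_eq, hμ.map_α_mid, hμ.map_α_right]

theorem cube_add (hμ : IsOnoiMapping R₁ R₂ μ) (x y : O₁) :
    μ (x + y) (x + y) (x + y) = μ x x x + μ y y y +
      ((μ x x y + μ x y x) + (μ x y y + μ y x x) + (μ y y x + μ y x y)) := by
  simp only [hμ.map_add_left, hμ.map_add_mid, hμ.map_add_right]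
  abel

theorem cube_add_of_medial (hμ : IsOnoiMapping R₁ R₂ μ) (θ : O₁ → O₁ → O₂)
    (hθ : ∀ a b, θ a b = μ a (a + b) (a + b)) (star : O₁ → O₁ → O₁)
    (hstar : ∀ a b, star a b = R₁.α (R₁.α a) + R₁.α b)
    (hM : ∀ a b, R₂.α (R₂.α (θ a b)) + R₂.α (θ 0 0) + θ (star a b) (star 0 0)
      = R₂.α (R₂.α (θ a 0)) + R₂.α (θ b 0) + θ (star a 0) (star b 0)) (x y : O₁) :
    μ (x + y) (x + y) (x + y) = μ x x x + μ y y y := by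
  have hθ_star : ∀ a b, θ (star a 0) (star b 0) = R₂.α (R₂.α (θ a b)) := by
    intro a b
    simp only [hstar, hθ, map_zero, add_zero]
    rw [← map_add, ← map_add, hμ.map_α, hμ.map_α]
  have key : ∀ a b, μ (R₁.α (R₁.α a) + R₁.α b) (R₁.α (R₁.α a) + R₁.α b)
      (R₁.α (R₁.α a) + R₁.α b) = R₂.α (R₂.α (μ a a a)) + R₂.α (μ b b b) := by
    intro a b
    have h := hM a b
    rw [hθ_star, add_comm _ (R₂.α (R₂.α (θ a b)))] at h
    simpa only [hθ, hstar, map_zero, add_zero, hμ.zero_left, add_right_inj] using h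
  simpa only [R₁.α_α_α, R₂.α_α_α, hμ.map_α] using key (R₁.α x) (R₁.α (R₁.α y))

theorem polar_eq_zero_of_cube_add (hμ : IsOnoiMapping R₁ R₂ μ)
    (hadd : ∀ x y, μ (x + y) (x + y) (x + y) = μ x x x + μ y y y) (x y : O₁) :
    (μ x x y + μ x y x) + (μ x y y + μ y x x) + (μ y y x + μ y x y) = 0 :=
  left_eq_add.mp ((hadd x y).symm.trans (hμ.cube_add x y))

theorem diag_swap_add_eq_zero_of_cube_add (hμ : IsOnoiMapping R₁ R₂ μ)
    (hadd : ∀ x y, μ (x + y) (x + y) (x + y) = μ x x x + μ y y y) (x y : O₁) :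
    μ x x y + μ x y x = 0 := by
  refine R₂.eq_zero_of_twisted_sums (b := μ x y y + μ y x x) (c := μ y y x + μ y x y)
    (hμ.polar_eq_zero_of_cube_add hadd x y) ?_ ?_
  · simpa only [hμ.map_α_left, hμ.map_α_mid, hμ.map_α_right, map_add, R₂.α_α_α]
      using hμ.polar_eq_zero_of_cube_add hadd (R₁.α x) y
  · simpa only [hμ.map_α_left, hμ.map_α_mid, hμ.map_α_right, map_add, R₂.α_α_α]
      using hμ.polar_eq_zero_of_cube_add hadd (R₁.α (R₁.α x)) y

theorem apply_swap_of_cube_add (hμ : IsOnoiMapping R₁ R₂ μ)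
    (hadd : ∀ x y, μ (x + y) (x + y) (x + y) = μ x x x + μ y y y) (x y : O₁) :
    μ x y y = μ y x x := by
  have h := hμ.polar_eq_zero_of_cube_add hadd x y
  rw [hμ.diag_swap_add_eq_zero_of_cube_add hadd x y,
    hμ.diag_swap_add_eq_zero_of_cube_add hadd y x, zero_add, add_zero] at h
  exact R₂.eq_of_add_eq_zero h

theorem swap_mid_right_of_diag_swap (hμ : IsOnoiMapping R₁ R₂ μ)
    (hA : ∀ x y, μ x x y + μ x y x = 0) (a b c : O₁) : μ a b c = μ a c b := by
  have hF : ∀ a, (μ a b c + μ a c b) + (μ b a c + μ b c a) = 0 := fun a =>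
    calc _ = (μ a a c + μ a c a) + (μ b b c + μ b c b)
          + ((μ a b c + μ a c b) + (μ b a c + μ b c a)) := by
          rw [hA a c, hA b c, add_zero, zero_add]
      _ = μ (a + b) (a + b) c + μ (a + b) c (a + b) := by
          simp only [hμ.map_add_left, hμ.map_add_mid, hμ.map_add_right]
          abel
      _ = 0 := hA (a + b) c
  refine R₂.eq_of_add_eq_zero (R₂.eq_zero_of_add_eq_zero_of_twist (hF a) ?_)
  simpa only [hμ.map_α_left, hμ.map_α_mid, hμ.map_α_right, map_add] using hF (R₁.α a)

end IsOnoiMapping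

theorem onoi_mapping_mediality_necessary {O₁ O₂ : Type*} [AddCommGroup O₁] [AddCommGroup O₂]
    (R₁ : OnoiRing O₁) (R₂ : OnoiRing O₂) (μ : O₁ → O₁ → O₁ → O₂)
    (hlin₁ : ∀ a₁ a₂ b c, μ (a₁ + a₂) b c = μ a₁ b c + μ a₂ b c)
    (hlin₂ : ∀ a b₁ b₂ c, μ a (b₁ + b₂) c = μ a b₁ c + μ a b₂ c)
    (hlin₃ : ∀ a b c₁ c₂, μ a b (c₁ + c₂) = μ a b c₁ + μ a b c₂)
    (hOM1 : ∀ a b c, μ (R₁.α a) (R₁.α b) (R₁.α c) = R₂.α (μ a b c))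
    (hOM2 : ∀ a b c, μ (R₁.α a) b c = μ a (R₁.α b) (R₁.α c))
    (hOM3 : ∀ a b c, μ a (R₁.α b) c = μ a b (R₁.α c))
    (θ : O₁ → O₁ → O₂) (hθ : ∀ a b, θ a b = μ a (a + b) (a + b))
    (star : O₁ → O₁ → O₁) (hstar : ∀ a b, star a b = R₁.α (R₁.α a) + R₁.α b)
    (hM : ∀ a b c d, R₂.α (R₂.α (θ a b)) + R₂.α (θ c d) + θ (star a b) (star c d)
      = R₂.α (R₂.α (θ a c)) + R₂.α (θ b d) + θ (star a c) (star b d)) :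
    (∀ a b, μ a b b = μ b a a) ∧ (∀ a b c, μ a b c = μ a c b) := by
  have hμ : IsOnoiMapping R₁ R₂ μ := ⟨hlin₁, hlin₂, hlin₃, hOM1, hOM2, hOM3⟩
  have hadd := hμ.cube_add_of_medial θ hθ star hstar fun a b => hM a b 0 0
  exact ⟨hμ.apply_swap_of_cube_add hadd,
    hμ.swap_mid_right_of_diag_swap (hμ.diag_swap_add_eq_zero_of_cube_add hadd)⟩
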